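/- Let a_{n,m} be the triangle numbers. For every natural number μ ≥ 1 one has a_{2μ,μ−1} = (μ/3)·(2μ+1)!!; equivalently, 3 · 2^μ · μ! · a_{2μ,μ−1} = μ·(2μ+1)! as integers. -/
import Mathlib


/-- The triangle numbers `a_{n,m}`: `a_{n,0} = 1`, `a_{0,m} = 0` for `m > 0`, and
`a_{n,m} = (n - 2(m-1)) a_{n-1,m-1} + a_{n-1,m}` for `n, m > 0`. -/
def triangleNum : ℕ → ℕ → ℤ
  | _, 0 => 1
  | 0, _ + 1 => 0
  | n + 1, m + 1 => ((n : ℤ) + 1 - 2 * m) * triangleNum n m + triangleNum n (m + 1)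

lemma aux (n m : ℕ) :
    ((n : ℤ) + 1 - 2 * m) * ((n + 1).choose (2 * m)) =
      (2 * m + 1) * ((n + 1).choose (2 * m + 1)) := by
  rcases le_or_gt (2 * m) (n + 1) with h | h
  · have := Nat.choose_succ_right_eq (n + 1) (2 * m)
    have h2 : ((n + 1 - 2 * m : ℕ) : ℤ) = (n : ℤ) + 1 - 2 * m := by
      push_cast [h]; ring
    have := congrArg (fun x : ℕ => (x : ℤ)) this
    push_cast at this
    rw [← h2]
    linarith [this]
  · rw [Nat.choose_eq_zero_of_lt h, Nat.choose_eq_zero_of_lt (by omega)]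
    simp

lemma key (n : ℕ) : ∀ m : ℕ,
    (2 : ℤ) ^ m * m.factorial * triangleNum n m =
      ((n + 1).choose (2 * m)) * ((2 * m).factorial) := by
  induction n with
  | zero =>
      intro m
      match m with
      | 0 => simp [triangleNum]
      | m + 1 =>
          rw [show triangleNum 0 (m+1) = 0 from rfl]
          rw [Nat.choose_eq_zero_of_lt (by omega)]
          simp
  | succ n IH =>
      intro m
      match m with
      | 0 => simp [triangleNum]
      | m + 1 =>
          have h1 := IH m
          have h2 := IH (m + 1)
          have h3 := aux n m
          have pascal : (((n + 2).choose (2 * m + 2) : ℕ) : ℤ) =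
              ((n + 1).choose (2 * m + 1) : ℕ) + ((n + 1).choose (2 * m + 2) : ℕ) := by
            have := Nat.choose_succ_succ (n + 1) (2 * m + 1)
            exact_mod_cast congrArg (fun x : ℕ => (x : ℤ)) this
          have fact2 : (((2 * (m + 1)).factorial : ℕ) : ℤ) =
              (2 * m + 2) * (2 * m + 1) * ((2 * m).factorial : ℕ) := by
            have : 2 * (m + 1) = (2 * m + 1) + 1 := by ring
            rw [this, Nat.factorial_succ, Nat.factorial_succ]
            push_cast; ring
          have hfac : (((m + 1).factorial : ℕ) : ℤ) = (m + 1) * (m.factorial : ℕ) := by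
            rw [Nat.factorial_succ]; push_cast; ring
          rw [show triangleNum (n + 1) (m + 1) =
            ((n : ℤ) + 1 - 2 * m) * triangleNum n m + triangleNum n (m + 1) from rfl]
          have h2m : (2 * (m + 1)) = 2 * m + 2 := by ring
          rw [h2m] at h2 fact2
          rw [hfac] at h2
          rw [show ((n:ℕ) + 1 + 1) = n + 2 from rfl, h2m, hfac]
          linear_combination (2 * ((m : ℤ) + 1) * ((n : ℤ) + 1 - 2 * m)) * h1 + h2 +
            (2 * ((m : ℤ) + 1) * ((2 * m).factorial : ℕ)) * h3 -
            (((2 * m + 2).factorial : ℕ) : ℤ) * pascal -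
            (((n + 1).choose (2 * m + 1) : ℕ) : ℤ) * fact2

/-- For every `μ ≥ 1`, `a_{2μ,μ-1} = (μ/3)·(2μ+1)!!`, i.e.
`3 · 2^μ · μ! · a_{2μ,μ-1} = μ·(2μ+1)!` as integers. -/
theorem triangleNum_even_subdiag (μ : ℕ) (hμ : 1 ≤ μ) :
    3 * 2 ^ μ * (μ.factorial : ℤ) * triangleNum (2 * μ) (μ - 1) = μ * (2 * μ + 1).factorial := by
  obtain ⟨k, rfl⟩ : ∃ k, μ = k + 1 := ⟨μ - 1, by omega⟩
  have h := key (2 * (k + 1)) k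
  have hch : (2 * (k + 1) + 1).choose (2 * k) = (2 * k + 3).choose 3 := by
    have hs := Nat.choose_symm (show 3 ≤ 2 * k + 3 by omega)
    rw [show 2 * k + 3 - 3 = 2 * k from by omega] at hs
    rw [show 2 * (k + 1) + 1 = 2 * k + 3 from by ring, hs]
  have hfact : (2 * k + 3).choose 3 * 6 * (2 * k).factorial = (2 * k + 3).factorial := by
    have := Nat.choose_mul_factorial_mul_factorial (show 3 ≤ 2 * k + 3 by omega)
    simpa [show 2 * k + 3 - 3 = 2 * k from by omega, Nat.factorial] using this
  have h3 : (2 * (k + 1) + 1).factorial = (2 * k + 3).factorial :=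
    congrArg Nat.factorial (by ring)
  rw [hch] at h
  have hμ1 : (k + 1 : ℕ) - 1 = k := by omega
  rw [hμ1, h3]
  have hfacs : ((k + 1).factorial : ℤ) = (k + 1) * k.factorial := by
    rw [Nat.factorial_succ]; push_cast; ring
  have hfZ : ((2 * k + 3).choose 3 : ℤ) * 6 * (2 * k).factorial = (2 * k + 3).factorial := by
    exact_mod_cast congrArg (fun x : ℕ => (x : ℤ)) hfact
  rw [hfacs]
  push_cast
  linear_combination (3 * 2 * ((k : ℤ) + 1)) * h + ((k : ℤ) + 1) * hfZ
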